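/- arXiv:2112.11871 — 4 statements merged into one kernel-verified Lean document; each statement's English description precedes it below -/
import Mathlib

section
/- Let f : I → ℝ be twice differentiable on I with nowhere vanishing first derivative and let p = (p_1,…,p_n) : I → ℝ_+^n. If i, j ∈ {1,…,n} with i ≠ j and p_i, p_j are differentiable on I, then the mixed second-order partial derivative ∂_i∂_j A_{f,p} exists at every diagonal point of I^n and (∂_i∂_j A_{f,p})^Δ = −(p_i p_j)'/p_0² − (p_i p_j/p_0²)·(f''/f') on I. -/
open Set Function Real

/-- The `n`-variable generalized Bajraktarević mean `A_{f,p}` on the interval `I`: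
`A_{f,p}(x) = f⁻¹((∑ pᵢ(xᵢ) f(xᵢ)) / (∑ pᵢ(xᵢ)))`. -/
noncomputable def bajMean {n : ℕ} (I : Set ℝ) (f : ℝ → ℝ) (p : Fin n → ℝ → ℝ)
    (x : Fin n → ℝ) : ℝ :=
  Function.invFunOn f I ((∑ i, p i (x i) * f (x i)) / (∑ i, p i (x i)))

/-- The `i`-th first-order partial derivative of `Φ : Iⁿ → ℝ`. -/
noncomputable def pder {n : ℕ} (Φ : (Fin n → ℝ) → ℝ) (i : Fin n) (y : Fin n → ℝ) : ℝ :=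
  deriv (fun t => Φ (Function.update y i t)) (y i)

/-- The second-order partial derivative `∂ᵢ∂ⱼΦ`. -/
noncomputable def pder2 {n : ℕ} (Φ : (Fin n → ℝ) → ℝ) (i j : Fin n) :
    (Fin n → ℝ) → ℝ :=
  pder (pder Φ j) i

/-- `M` is locally smaller than `N`: there is an open set `U ⊆ Iⁿ` containing the
diagonal of `Iⁿ` on which `M ≤ N`. -/
def LocallySmaller {n : ℕ} (I : Set ℝ) (M N : (Fin n → ℝ) → ℝ) : Prop :=
  ∃ U : Set (Fin n → ℝ), IsOpen U ∧ U ⊆ {x | ∀ i, x i ∈ I} ∧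
    (∀ x ∈ I, (fun _ => x) ∈ U) ∧ ∀ x ∈ U, M x ≤ N x

/-!
Write `A_{f,p} = f⁻¹ ∘ R` with `R(y) = ∑ pₖ(yₖ) f(yₖ) / ∑ pₖ(yₖ)`. As `f` has a nonvanishing
strict derivative on the open set `I`, its inverse is differentiable near `f(x)` with derivative
`1 / f' ∘ f⁻¹`, so along the `i`-th coordinate line through the diagonal point `(x, …, x)` one has
`∂ⱼA = ∂ⱼR / f'(A)` with `∂ⱼR = ((pⱼf)'(x) - R pⱼ'(x)) / p₀`. Differentiating this in the `i`-th
variable at the diagonal, where `A = x`, `R = f(x)`, `∂ᵢA = pᵢ/p₀` and `∂ᵢR = pᵢ f'/p₀`, gives the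
formula.
-/
open Filter Topology

section InverseFunction

variable {𝕜 : Type*} [NontriviallyNormedField 𝕜] [CompleteSpace 𝕜] {f : 𝕜 → 𝕜} {s : Set 𝕜}

theorem Set.InjOn.hasStrictDerivAt_invFunOn {f' a : 𝕜}
    (hinj : InjOn f s) (hs : s ∈ 𝓝 a) (hf : HasStrictDerivAt f f' a) (hf' : f' ≠ 0) :
    HasStrictDerivAt (invFunOn f s) f'⁻¹ (f a) :=
  hf.to_local_left_inverse hf' (eventually_of_mem hs fun _ hy => hinj.leftInvOn_invFunOn hy)

theorem Set.InjOn.eventually_hasDerivAt_invFunOn {f' : 𝕜 → 𝕜} {a : 𝕜}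
    (hinj : InjOn f s) (hs : IsOpen s) (hf : ∀ x ∈ s, HasStrictDerivAt f (f' x) x)
    (hf' : ∀ x ∈ s, f' x ≠ 0) (ha : a ∈ s) :
    ∀ᶠ z in 𝓝 (f a), HasDerivAt (invFunOn f s) (f' (invFunOn f s z))⁻¹ z := by
  rw [← (hf a ha).map_nhds_eq (hf' a ha), eventually_map]
  filter_upwards [hs.mem_nhds ha] with y hy
  rw [hinj.leftInvOn_invFunOn hy]
  exact (hinj.hasStrictDerivAt_invFunOn (hs.mem_nhds hy) (hf y hy) (hf' y hy)).hasDerivAt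

end InverseFunction

theorem Fintype.sum_apply_update {ι α M : Type*} [Fintype ι] [DecidableEq ι] [AddCommMonoid M]
    (q : ι → α → M) (y : ι → α) (j : ι) (s : α) :
    ∑ k, q k (update y j s k) = q j s + ∑ k ∈ Finset.univ.erase j, q k (y k) := by
  simp_rw [apply_update q]
  rw [Finset.sum_update_of_mem (Finset.mem_univ j), Finset.sdiff_singleton_eq_erase]

theorem hasDerivAt_sum_apply_update {𝕜 ι : Type*} [NontriviallyNormedField 𝕜] [Fintype ι]
    [DecidableEq ι] {q : ι → 𝕜 → 𝕜} {y : ι → 𝕜} {j : ι} {q' : 𝕜} (h : HasDerivAt (q j) q' (y j)) :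
    HasDerivAt (fun s => ∑ k, q k (update y j s k)) q' (y j) := by
  simp_rw [Fintype.sum_apply_update]
  exact h.add_const _

section BajraktarevicMean

variable {n : ℕ} {I : Set ℝ} {f : ℝ → ℝ} {p : Fin n → ℝ → ℝ}

noncomputable def weightedQuotient (f : ℝ → ℝ) (p : Fin n → ℝ → ℝ) (y : Fin n → ℝ) : ℝ :=
  (∑ k, p k (y k) * f (y k)) / ∑ k, p k (y k)

theorem weightedQuotient_const {x : ℝ} (h : ∑ k, p k x ≠ 0) :
    weightedQuotient f p (fun _ => x) = f x := by
  rw [weightedQuotient, ← Finset.sum_mul, mul_div_cancel_left₀ _ h]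

theorem bajMean_const {x : ℝ} (hinj : InjOn f I) (hx : x ∈ I) (h : ∑ k, p k x ≠ 0) :
    bajMean I f p (fun _ => x) = x := by
  change invFunOn f I (weightedQuotient f p _) = x
  rw [weightedQuotient_const h, hinj.leftInvOn_invFunOn hx]

theorem hasDerivAt_weightedQuotient_update {y : Fin n → ℝ} {j : Fin n} {fj' pj' : ℝ}
    (hf : HasDerivAt f fj' (y j)) (hp : HasDerivAt (p j) pj' (y j)) (hD : ∑ k, p k (y k) ≠ 0) :
    HasDerivAt (fun s => weightedQuotient f p (update y j s))
      ((pj' * f (y j) + p j (y j) * fj' - weightedQuotient f p y * pj') / ∑ k, p k (y k))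
      (y j) := by
  have hN := hasDerivAt_sum_apply_update (q := fun k t => p k t * f t) (hp.mul hf)
  have hD' := hasDerivAt_sum_apply_update (q := p) hp
  have h := hN.div hD' (by simpa using hD)
  simp only [update_eq_self] at h
  refine h.congr_deriv ?_
  rw [weightedQuotient]
  field_simp

theorem hasDerivAt_weightedQuotient_update_const {x fx' px' : ℝ} {i : Fin n}
    (hf : HasDerivAt f fx' x) (hp : HasDerivAt (p i) px' x) (hD : ∑ k, p k x ≠ 0) :
    HasDerivAt (fun t => weightedQuotient f p (update (fun _ => x) i t))
      (p i x * fx' / ∑ k, p k x) x := by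
  convert hasDerivAt_weightedQuotient_update (y := fun _ => x) hf hp hD using 1
  rw [weightedQuotient_const hD]
  ring

theorem hasDerivAt_bajMean_update_const {x fx' px' : ℝ} {i : Fin n} (hinj : InjOn f I)
    (hI : I ∈ 𝓝 x) (hf : HasStrictDerivAt f fx' x) (hfx' : fx' ≠ 0) (hp : HasDerivAt (p i) px' x)
    (hD : ∑ k, p k x ≠ 0) :
    HasDerivAt (fun t => bajMean I f p (update (fun _ => x) i t)) (p i x / ∑ k, p k x) x := by
  have h := (hinj.hasStrictDerivAt_invFunOn hI hf hfx').hasDerivAt.comp_of_eq x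
    (hasDerivAt_weightedQuotient_update_const hf.hasDerivAt hp hD)
    (by rw [update_eq_self, weightedQuotient_const hD])
  refine h.congr_deriv ?_
  field_simp

theorem sum_update_const_pos (hp : ∀ k, ∀ x ∈ I, 0 < p k x) {x t : ℝ} (hx : x ∈ I)
    (ht : t ∈ I) (i : Fin n) : 0 < ∑ k, p k (update (fun _ => x) i t k) :=
  Finset.sum_pos (fun k _ => hp k _ (by rcases eq_or_ne k i with rfl | hk <;> simp [*]))
    ⟨i, Finset.mem_univ i⟩

theorem pder_bajMean_eq {f' : ℝ → ℝ} {y : Fin n → ℝ} {j : Fin n} {pj' : ℝ}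
    (hg : HasDerivAt (invFunOn f I) (f' (bajMean I f p y))⁻¹ (weightedQuotient f p y))
    (hf : HasDerivAt f (f' (y j)) (y j)) (hp : HasDerivAt (p j) pj' (y j))
    (hD : ∑ k, p k (y k) ≠ 0) :
    pder (bajMean I f p) j y = (f' (bajMean I f p y))⁻¹ *
      ((pj' * f (y j) + p j (y j) * f' (y j) - weightedQuotient f p y * pj') / ∑ k, p k (y k)) :=
  (hg.comp_of_eq (y j) (hasDerivAt_weightedQuotient_update hf hp hD) (by simp)).deriv

theorem pder_bajMean_update_eventuallyEq {f' : ℝ → ℝ} {x pj' : ℝ} {i j : Fin n} (hij : i ≠ j)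
    (hg : ∀ᶠ z in 𝓝 (f x), HasDerivAt (invFunOn f I) (f' (invFunOn f I z))⁻¹ z)
    (hR : Tendsto (fun t => weightedQuotient f p (update (fun _ => x) i t)) (𝓝 x) (𝓝 (f x)))
    (hD : ∀ᶠ t in 𝓝 x, ∑ k, p k (update (fun _ => x) i t k) ≠ 0)
    (hf : HasDerivAt f (f' x) x) (hp : HasDerivAt (p j) pj' x) :
    (fun t => pder (bajMean I f p) j (update (fun _ => x) i t)) =ᶠ[𝓝 x] fun t =>
      (f' (bajMean I f p (update (fun _ => x) i t)))⁻¹ *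
        ((pj' * f x + p j x * f' x - weightedQuotient f p (update (fun _ => x) i t) * pj') /
          ∑ k, p k (update (fun _ => x) i t k)) := by
  filter_upwards [hR.eventually hg, hD] with t hgt hDt
  have hj : update (fun _ => x) i t j = x := update_of_ne hij.symm _ _
  have := pder_bajMean_eq hgt (hj ▸ hf) (hj ▸ hp) hDt
  rwa [hj] at this

end BajraktarevicMean

theorem stmt2_general {n : ℕ} (I : Set ℝ) (hIopen : IsOpen I)
    (f f' f'' : ℝ → ℝ) (p p' : Fin n → ℝ → ℝ)
    (hfmono : StrictMonoOn f I ∨ StrictAntiOn f I)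
    (hf : ∀ x ∈ I, HasDerivAt f (f' x) x)
    (hf' : ∀ x ∈ I, HasDerivAt f' (f'' x) x)
    (hf'0 : ∀ x ∈ I, f' x ≠ 0)
    (hp : ∀ j, ∀ x ∈ I, 0 < p j x)
    (i j : Fin n) (hij : i ≠ j)
    (hpi : ∀ x ∈ I, HasDerivAt (p i) (p' i x) x)
    (hpj : ∀ x ∈ I, HasDerivAt (p j) (p' j x) x) :
    ∀ x ∈ I,
      DifferentiableAt ℝ
        (fun t => pder (bajMean I f p) j (Function.update (fun _ => x) i t)) x ∧
      pder2 (bajMean I f p) i j (fun _ => x) =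
        -((p' i x * p j x + p i x * p' j x) / (∑ k, p k x) ^ 2) -
          (p i x * p j x / (∑ k, p k x) ^ 2) * (f'' x / f' x) := by
  intro x hx
  have hinj : InjOn f I := hfmono.elim StrictMonoOn.injOn StrictAntiOn.injOn
  have hstrict : ∀ y ∈ I, HasStrictDerivAt f (f' y) y := fun y hy =>
    hasStrictDerivAt_of_hasDerivAt_of_continuousAt (eventually_of_mem (hIopen.mem_nhds hy) hf)
      (hf' y hy).continuousAt
  have hg := hinj.eventually_hasDerivAt_invFunOn hIopen hstrict hf'0 hx
  have hdiag : update (fun _ => x) i x = fun _ => x := update_eq_self i _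
  have hD0 : 0 < ∑ k, p k x := by simpa [hdiag] using sum_update_const_pos hp hx hx i
  have hRx := weightedQuotient_const (f := f) hD0.ne'
  have hAx := bajMean_const hinj hx hD0.ne'
  have hR := hasDerivAt_weightedQuotient_update_const (hf x hx) (hpi x hx) hD0.ne'
  have hA := hasDerivAt_bajMean_update_const hinj (hIopen.mem_nhds hx) (hstrict x hx) (hf'0 x hx)
    (hpi x hx) hD0.ne'
  have hpder := pder_bajMean_update_eventuallyEq hij hg
    (by simpa only [ContinuousAt, hdiag, hRx] using hR.continuousAt)
    (eventually_of_mem (hIopen.mem_nhds hx) fun t ht => (sum_update_const_pos hp hx ht i).ne')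
    (hf x hx) (hpj x hx)
  -- the derivative of the right-hand side of `hpder`
  have hF := (((hf' x hx).comp_of_eq x hA (by simp only [hdiag, hAx])).inv
      (by simpa only [comp_apply, hdiag, hAx] using hf'0 x hx)).mul
    (((hR.mul_const (p' j x)).const_sub (p' j x * f x + p j x * f' x)).div
      (hasDerivAt_sum_apply_update (q := p) (y := fun _ => x) (hpi x hx))
      (by simpa [hdiag] using hD0.ne'))
  refine ⟨(hF.congr_of_eventuallyEq hpder).differentiableAt, ?_⟩
  rw [pder2, pder, (hF.congr_of_eventuallyEq hpder).deriv]
  simp only [comp_apply, Pi.div_apply, Pi.inv_apply, hdiag, hAx, hRx]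
  field_simp [hf'0 x hx]
  ring

/-- Lemma DB (2b): if `f` is twice differentiable on `I` with nonvanishing first
derivative, `p : I → ℝ₊ⁿ`, `i ≠ j` and `pᵢ, pⱼ` are differentiable on `I`, then
`∂ᵢ∂ⱼ A_{f,p}` exists at every diagonal point of `Iⁿ` and
`(∂ᵢ∂ⱼ A_{f,p})^Δ = -(pᵢpⱼ)'/p₀² - (pᵢpⱼ/p₀²)·(f''/f')`. -/
theorem stmt2 {n : ℕ} (hn : 2 ≤ n) (I : Set ℝ) (hIopen : IsOpen I)
    (hIconn : I.OrdConnected) (hIne : I.Nonempty)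
    (f f' f'' : ℝ → ℝ) (p p' : Fin n → ℝ → ℝ)
    (hfmono : StrictMonoOn f I ∨ StrictAntiOn f I)
    (hf : ∀ x ∈ I, HasDerivAt f (f' x) x)
    (hf' : ∀ x ∈ I, HasDerivAt f' (f'' x) x)
    (hf'0 : ∀ x ∈ I, f' x ≠ 0)
    (hp : ∀ j, ∀ x ∈ I, 0 < p j x)
    (i j : Fin n) (hij : i ≠ j)
    (hpi : ∀ x ∈ I, HasDerivAt (p i) (p' i x) x)
    (hpj : ∀ x ∈ I, HasDerivAt (p j) (p' j x) x) :
    ∀ x ∈ I,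
      DifferentiableAt ℝ
        (fun t => pder (bajMean I f p) j (Function.update (fun _ => x) i t)) x ∧
      pder2 (bajMean I f p) i j (fun _ => x) =
        -((p' i x * p j x + p i x * p' j x) / (∑ k, p k x) ^ 2) -
          (p i x * p j x / (∑ k, p k x) ^ 2) * (f'' x / f' x) :=
  stmt2_general I hIopen f f' f'' p p' hfmono hf hf' hf'0 hp i j hij hpi hpj
end

section
/- Let n ≥ 2 and let M, N : I^n → I be n-variable means (i.e., min(x_1,…,x_n) ≤ M(x_1,…,x_n) ≤ max(x_1,…,x_n) for all x_1,…,x_n ∈ I, and similarly for N) such that M is locally smaller than N. If M and N are partially differentiable at every diagonal point of I^n, then (∂_i M)^Δ = (∂_i N)^Δ on I for every i ∈ {1,…,n}. If, in addition, M and N are twice differentiable at every diagonal point of I^n, then at every point of I the symmetric (n−1)×(n−1)-matrix with (i,j)-entry (∂_i∂_j N)^Δ − (∂_i∂_j M)^Δ, for i, j ∈ {1,…,n−1}, is positive semidefinite. -/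
/-!
On the diagonal both means are the identity, so `N - M` attains a local minimum `0` at every
diagonal point. The first-order condition at this minimum, taken along each coordinate line,
equates the partial derivatives; the second-order condition says the Hessian of `N - M` is
positive semidefinite there, hence so is each of its principal submatrices.
-/

open Set Function Real

open Filter Topology

def IsMeanOn {ι : Type*} (I : Set ℝ) (M : (ι → ℝ) → ℝ) : Prop :=
  ∀ x : ι → ℝ, (∀ i, x i ∈ I) → (⨅ i, x i) ≤ M x ∧ M x ≤ ⨆ i, x i

section Differentiability

variable {𝕜 E F : Type*} [NontriviallyNormedField 𝕜] [NormedAddCommGroup E] [NormedSpace 𝕜 E]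
  [NormedAddCommGroup F] [NormedSpace 𝕜 F]

theorem eventually_differentiableAt_of_continuousAt_fderiv {f : E → F} {x : E}
    (h : ContinuousAt (fderiv 𝕜 f) x) (hne : fderiv 𝕜 f x ≠ 0) :
    ∀ᶠ y in 𝓝 x, DifferentiableAt 𝕜 f y := by
  filter_upwards [h.eventually_ne hne] with y hy
  by_contra hnd
  exact hy (fderiv_zero_of_not_differentiableAt hnd)

theorem fderiv_sub_eventuallyEq {f g : E → F} {a : E}
    (hf : ∀ᶠ z in 𝓝 a, DifferentiableAt 𝕜 f z) (hg : ∀ᶠ z in 𝓝 a, DifferentiableAt 𝕜 g z) :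
    fderiv 𝕜 (fun z => f z - g z) =ᶠ[𝓝 a] fderiv 𝕜 f - fderiv 𝕜 g := by
  filter_upwards [hf, hg] with z hfz hgz
  exact fderiv_sub hfz hgz

theorem HasDerivAt.fderiv_comp_apply {g : E → F} {γ : 𝕜 → E} {γ' : E} {t₀ : 𝕜}
    (hγ : HasDerivAt γ γ' t₀) (hg : DifferentiableAt 𝕜 (fderiv 𝕜 g) (γ t₀)) (w : E) :
    HasDerivAt (fun t => fderiv 𝕜 g (γ t) w) (fderiv 𝕜 (fderiv 𝕜 g) (γ t₀) γ' w) t₀ :=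
  ((ContinuousLinearMap.apply 𝕜 F w).hasFDerivAt.comp_hasDerivAt t₀
    (hg.hasFDerivAt.comp_hasDerivAt t₀ hγ) :)

end Differentiability

section SecondDerivative

variable {E : Type*} [NormedAddCommGroup E] [NormedSpace ℝ E]

theorem IsLocalMin.deriv_deriv_nonneg {f : ℝ → ℝ} {x₀ : ℝ} (h : IsLocalMin f x₀)
    (hc : ContinuousAt f x₀) : 0 ≤ deriv (deriv f) x₀ := by
  by_contra! hneg
  -- a negative second derivative would make `x₀` also a local maximum, so `f` is locally constant
  have hmax := isLocalMax_of_deriv_deriv_neg hneg h.deriv_eq_zero hc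
  have hconst : f =ᶠ[𝓝 x₀] fun _ => f x₀ := by
    filter_upwards [h, hmax] with x hmin hmax using le_antisymm hmax hmin
  have hderiv : deriv f =ᶠ[𝓝 x₀] fun _ => 0 := by
    filter_upwards [hconst.eventuallyEq_nhds] with x hx
    rw [hx.deriv_eq, deriv_const]
  rw [hderiv.deriv_eq, deriv_const] at hneg
  exact lt_irrefl 0 hneg

theorem IsLocalMin.fderiv_fderiv_apply_self_nonneg {g : E → ℝ} {a : E} (h : IsLocalMin g a)
    (hg : ∀ᶠ z in 𝓝 a, DifferentiableAt ℝ g z) (hg2 : DifferentiableAt ℝ (fderiv ℝ g) a)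
    (w : E) : 0 ≤ fderiv ℝ (fderiv ℝ g) a w w := by
  set line : ℝ → E := fun t => a + t • w
  have hline : ∀ t, HasDerivAt line w t := fun t => by
    simpa [line] using ((hasDerivAt_id t).smul_const w).const_add a
  have hline0 : line 0 = a := by simp [line]
  have htendsto : Tendsto line (𝓝 0) (𝓝 a) := hline0 ▸ (hline 0).continuousAt.tendsto
  have hmin : IsLocalMin (g ∘ line) 0 := (hline0 ▸ h).comp_continuous (hline 0).continuousAt
  have hcont : ContinuousAt (g ∘ line) 0 :=
    (hline0 ▸ hg.self_of_nhds.continuousAt).comp (hline 0).continuousAt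
  have hderiv : deriv (g ∘ line) =ᶠ[𝓝 0] fun t => fderiv ℝ g (line t) w := by
    filter_upwards [htendsto.eventually hg] with t ht
    exact (ht.hasFDerivAt.comp_hasDerivAt t (hline t)).deriv
  have h2 := (hline 0).fderiv_comp_apply (hline0 ▸ hg2) w
  rw [hline0] at h2
  calc 0 ≤ deriv (deriv (g ∘ line)) 0 := hmin.deriv_deriv_nonneg hcont
    _ = fderiv ℝ (fderiv ℝ g) a w w := by rw [hderiv.deriv_eq, h2.deriv]

end SecondDerivative

section PartialDerivatives

variable {n : ℕ}

theorem pder_eq_fderiv {Φ : (Fin n → ℝ) → ℝ} {z : Fin n → ℝ} (j : Fin n)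
    (h : DifferentiableAt ℝ Φ z) : pder Φ j z = fderiv ℝ Φ z (Pi.single j 1) := by
  have h' : HasFDerivAt Φ (fderiv ℝ Φ z) (update z j (z j)) := by
    rw [update_eq_self]
    exact h.hasFDerivAt
  exact (h'.comp_hasDerivAt (z j) (hasDerivAt_update z j (z j))).deriv

theorem pder2_eq_fderiv_fderiv {Φ : (Fin n → ℝ) → ℝ} {a : Fin n → ℝ}
    (hΦ : ∀ᶠ z in 𝓝 a, DifferentiableAt ℝ Φ z) (hΦ2 : DifferentiableAt ℝ (fderiv ℝ Φ) a)
    (i j : Fin n) :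
    pder2 Φ i j a = fderiv ℝ (fderiv ℝ Φ) a (Pi.single i 1) (Pi.single j 1) := by
  have hupd := hasDerivAt_update a i (a i)
  have htendsto := hupd.continuousAt.tendsto
  rw [update_eq_self] at htendsto
  have hpder : (fun t => pder Φ j (update a i t))
      =ᶠ[𝓝 (a i)] fun t => fderiv ℝ Φ (update a i t) (Pi.single j 1) := by
    filter_upwards [htendsto.eventually hΦ] with t ht
    exact pder_eq_fderiv j ht
  have hΦ2' : DifferentiableAt ℝ (fderiv ℝ Φ) (update a i (a i)) := by rwa [update_eq_self]
  have h2 := hupd.fderiv_comp_apply hΦ2' (Pi.single j 1)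
  rw [update_eq_self] at h2
  exact hpder.deriv_eq.trans h2.deriv

theorem pder2_sub {f g : (Fin n → ℝ) → ℝ} {a : Fin n → ℝ}
    (hf : ∀ᶠ z in 𝓝 a, DifferentiableAt ℝ f z) (hg : ∀ᶠ z in 𝓝 a, DifferentiableAt ℝ g z)
    (hf2 : DifferentiableAt ℝ (fderiv ℝ f) a) (hg2 : DifferentiableAt ℝ (fderiv ℝ g) a)
    (i j : Fin n) :
    pder2 (fun z => f z - g z) i j a = pder2 f i j a - pder2 g i j a := by
  have hsub := fderiv_sub_eventuallyEq hf hg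
  rw [pder2_eq_fderiv_fderiv (Φ := fun z => f z - g z) (hf.and hg |>.mono fun _ h => h.1.sub h.2)
      (hsub.differentiableAt_iff.2 (hf2.sub hg2)), hsub.fderiv_eq, fderiv_sub hf2 hg2,
    pder2_eq_fderiv_fderiv hf hf2, pder2_eq_fderiv_fderiv hg hg2]
  rfl

theorem IsLocalMin.sum_mul_pder2_nonneg {Φ : (Fin n → ℝ) → ℝ} {a : Fin n → ℝ}
    (h : IsLocalMin Φ a) (hΦ : ∀ᶠ z in 𝓝 a, DifferentiableAt ℝ Φ z)
    (hΦ2 : DifferentiableAt ℝ (fderiv ℝ Φ) a) {ι : Type*} [Fintype ι] (v : ι → ℝ)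
    (e : ι → Fin n) : 0 ≤ ∑ i, ∑ j, v i * v j * pder2 Φ (e i) (e j) a := by
  have hq := h.fderiv_fderiv_apply_self_nonneg hΦ hΦ2 (∑ i, v i • Pi.single (e i) 1)
  simp only [map_sum, map_smul, sum_apply, smul_apply, smul_eq_mul, Finset.mul_sum] at hq
  rw [Finset.sum_comm] at hq
  convert hq using 3 with i _ j
  rw [pder2_eq_fderiv_fderiv hΦ hΦ2]
  ring

end PartialDerivatives

theorem IsMeanOn.apply_const {ι : Type*} [Nonempty ι] {I : Set ℝ} {M : (ι → ℝ) → ℝ}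
    (hM : IsMeanOn I M) {t : ℝ} (ht : t ∈ I) : M (fun _ => t) = t := by
  have h := hM (fun _ => t) fun _ => ht
  rw [ciInf_const, ciSup_const] at h
  exact le_antisymm h.2 h.1

theorem fderiv_apply_one_of_diag_eventuallyEq_id {ι : Type*} [Fintype ι] {Φ : (ι → ℝ) → ℝ}
    {x : ℝ} (hΦ : DifferentiableAt ℝ Φ (fun _ => x))
    (hdiag : (fun t => Φ (fun _ => t)) =ᶠ[𝓝 x] id) :
    fderiv ℝ Φ (fun _ => x) (fun _ => 1) = 1 :=
  (hΦ.hasFDerivAt.comp_hasDerivAt x (hasDerivAt_pi.2 fun _ => hasDerivAt_id x)).unique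
    ((hasDerivAt_id x).congr_of_eventuallyEq hdiag)

-- `fderiv` is junk `0` where `Φ` is not differentiable, while along the diagonal a mean has
-- derivative `1`; continuity of `fderiv` thus forces differentiability near the diagonal point.
theorem IsMeanOn.eventually_differentiableAt {ι : Type*} [Fintype ι] [Nonempty ι]
    {I : Set ℝ} {M : (ι → ℝ) → ℝ} (hM : IsMeanOn I M) {x : ℝ} (hI : I ∈ 𝓝 x)
    (hd : DifferentiableAt ℝ M (fun _ => x)) (hd2 : DifferentiableAt ℝ (fderiv ℝ M) (fun _ => x)) :
    ∀ᶠ z in 𝓝 (fun _ => x), DifferentiableAt ℝ M z := by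
  have hdiag : (fun t => M (fun _ => t)) =ᶠ[𝓝 x] id :=
    eventually_of_mem hI fun t ht => hM.apply_const ht
  refine eventually_differentiableAt_of_continuousAt_fderiv hd2.continuousAt fun h0 => ?_
  have h1 := fderiv_apply_one_of_diag_eventuallyEq_id hd hdiag
  rw [h0] at h1
  exact zero_ne_one h1

section Means

variable {n : ℕ} {I : Set ℝ} {M N : (Fin n → ℝ) → ℝ} [Nonempty (Fin n)]

theorem LocallySmaller.mem_nhds (hloc : LocallySmaller I M N) {x : ℝ} (hx : x ∈ I) :
    I ∈ 𝓝 x := by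
  obtain ⟨U, hU, hUI, hdiag, -⟩ := hloc
  have hpre : (fun t : ℝ => fun _ : Fin n => t) ⁻¹' U ∈ 𝓝 x :=
    (continuous_pi fun _ => continuous_id).continuousAt.preimage_mem_nhds
      (hU.mem_nhds (hdiag x hx))
  exact mem_of_superset hpre fun t ht => hUI ht (Classical.arbitrary _)

theorem LocallySmaller.isLocalMin_sub (hM : IsMeanOn I M) (hN : IsMeanOn I N)
    (hloc : LocallySmaller I M N) {x : ℝ} (hx : x ∈ I) :
    IsLocalMin (fun z => N z - M z) (fun _ => x) := by
  obtain ⟨U, hU, -, hdiag, hle⟩ := hloc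
  filter_upwards [hU.mem_nhds (hdiag x hx)] with z hz
  rw [hM.apply_const hx, hN.apply_const hx, sub_self, sub_nonneg]
  exact hle z hz

theorem LocallySmaller.pder_eq (hM : IsMeanOn I M) (hN : IsMeanOn I N)
    (hloc : LocallySmaller I M N) {x : ℝ} (hx : x ∈ I) (i : Fin n)
    (hMd : DifferentiableAt ℝ (fun t => M (update (fun _ => x) i t)) x)
    (hNd : DifferentiableAt ℝ (fun t => N (update (fun _ => x) i t)) x) :
    pder M i (fun _ => x) = pder N i (fun _ => x) := by
  have hupd := (hasDerivAt_update (fun _ => x) i x).continuousAt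
  have hmin := (update_eq_self i (fun _ : Fin n => x) ▸ hloc.isLocalMin_sub hM hN hx)
    |>.comp_continuous hupd
  have h0 := hmin.deriv_eq_zero
  rw [comp_def, deriv_fun_sub hNd hMd, sub_eq_zero] at h0
  exact h0.symm

end Means

theorem stmt3_general {n : ℕ} (hn : 2 ≤ n) (I : Set ℝ)
    (M N : (Fin n → ℝ) → ℝ)
    (hM : ∀ x : Fin n → ℝ, (∀ i, x i ∈ I) → (⨅ i, x i) ≤ M x ∧ M x ≤ ⨆ i, x i)
    (hN : ∀ x : Fin n → ℝ, (∀ i, x i ∈ I) → (⨅ i, x i) ≤ N x ∧ N x ≤ ⨆ i, x i)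
    (hloc : LocallySmaller I M N)
    (hMd : ∀ x ∈ I, ∀ i : Fin n,
      DifferentiableAt ℝ (fun t => M (Function.update (fun _ => x) i t)) x)
    (hNd : ∀ x ∈ I, ∀ i : Fin n,
      DifferentiableAt ℝ (fun t => N (Function.update (fun _ => x) i t)) x) :
    (∀ x ∈ I, ∀ i : Fin n, pder M i (fun _ => x) = pder N i (fun _ => x)) ∧
    ((∀ x ∈ I, DifferentiableAt ℝ M (fun _ => x) ∧
        DifferentiableAt ℝ (fderiv ℝ M) (fun _ => x)) →
     (∀ x ∈ I, DifferentiableAt ℝ N (fun _ => x) ∧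
        DifferentiableAt ℝ (fderiv ℝ N) (fun _ => x)) →
     ∀ x ∈ I, ∀ v : Fin (n - 1) → ℝ,
       0 ≤ ∑ i : Fin (n - 1), ∑ j : Fin (n - 1), v i * v j *
          (pder2 N (Fin.castLE (Nat.sub_le n 1) i) (Fin.castLE (Nat.sub_le n 1) j)
              (fun _ => x) -
            pder2 M (Fin.castLE (Nat.sub_le n 1) i) (Fin.castLE (Nat.sub_le n 1) j)
              (fun _ => x))) := by
  have : Nonempty (Fin n) := ⟨⟨0, by omega⟩⟩
  refine ⟨fun x hx i => hloc.pder_eq hM hN hx i (hMd x hx i) (hNd x hx i), ?_⟩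
  intro hM2 hN2 x hx v
  obtain ⟨hMx, hMx2⟩ := hM2 x hx
  obtain ⟨hNx, hNx2⟩ := hN2 x hx
  have hI := hloc.mem_nhds hx
  have hMev := IsMeanOn.eventually_differentiableAt hM hI hMx hMx2
  have hNev := IsMeanOn.eventually_differentiableAt hN hI hNx hNx2
  have hsub := fderiv_sub_eventuallyEq hNev hMev
  have key := (hloc.isLocalMin_sub hM hN hx).sum_mul_pder2_nonneg
    (hNev.and hMev |>.mono fun _ h => h.1.sub h.2) (hsub.differentiableAt_iff.2 (hNx2.sub hMx2))
    v (Fin.castLE (Nat.sub_le n 1))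
  simpa only [pder2_sub hNev hMev hNx2 hMx2] using key

/-- Theorem PZ17, necessity part: if the means `M, N` on `Iⁿ` satisfy that `M` is
locally smaller than `N` and are partially differentiable at every diagonal point,
then `(∂ᵢM)^Δ = (∂ᵢN)^Δ` for all `i`; if moreover `M` and `N` are twice differentiable
at every diagonal point, then the `(n-1)×(n-1)` matrix
`((∂ᵢ∂ⱼN)^Δ - (∂ᵢ∂ⱼM)^Δ)_{i,j=1}^{n-1}` is positive semidefinite at every point of `I`. -/
theorem stmt3 {n : ℕ} (hn : 2 ≤ n) (I : Set ℝ) (hIopen : IsOpen I)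
    (hIconn : I.OrdConnected) (hIne : I.Nonempty)
    (M N : (Fin n → ℝ) → ℝ)
    (hM : ∀ x : Fin n → ℝ, (∀ i, x i ∈ I) → (⨅ i, x i) ≤ M x ∧ M x ≤ ⨆ i, x i)
    (hN : ∀ x : Fin n → ℝ, (∀ i, x i ∈ I) → (⨅ i, x i) ≤ N x ∧ N x ≤ ⨆ i, x i)
    (hloc : LocallySmaller I M N)
    (hMd : ∀ x ∈ I, ∀ i : Fin n,
      DifferentiableAt ℝ (fun t => M (Function.update (fun _ => x) i t)) x)
    (hNd : ∀ x ∈ I, ∀ i : Fin n,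
      DifferentiableAt ℝ (fun t => N (Function.update (fun _ => x) i t)) x) :
    (∀ x ∈ I, ∀ i : Fin n, pder M i (fun _ => x) = pder N i (fun _ => x)) ∧
    ((∀ x ∈ I, DifferentiableAt ℝ M (fun _ => x) ∧
        DifferentiableAt ℝ (fderiv ℝ M) (fun _ => x)) →
     (∀ x ∈ I, DifferentiableAt ℝ N (fun _ => x) ∧
        DifferentiableAt ℝ (fderiv ℝ N) (fun _ => x)) →
     ∀ x ∈ I, ∀ v : Fin (n - 1) → ℝ,
       0 ≤ ∑ i : Fin (n - 1), ∑ j : Fin (n - 1), v i * v j *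
          (pder2 N (Fin.castLE (Nat.sub_le n 1) i) (Fin.castLE (Nat.sub_le n 1) j)
              (fun _ => x) -
            pder2 M (Fin.castLE (Nat.sub_le n 1) i) (Fin.castLE (Nat.sub_le n 1) j)
              (fun _ => x))) :=
  stmt3_general hn I M N hM hN hloc hMd hNd
end

section
/- Let n ≥ 2, let f, g : I → ℝ be twice continuously differentiable functions with nowhere vanishing first derivatives, and let p, q : I → ℝ_+^n be twice continuously differentiable. If p_i/p_0 = q_i/q_0 on I for every i ∈ {1,…,n} and the function x ↦ q_0(x)²|g'(x)| / (p_0(x)²|f'(x)|) has an everywhere positive derivative on I, then A_{f,p} is locally smaller than A_{g,q}. -/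
open Set Function Real

/-!
Put `P = ∑ pᵢ`, `Q = ∑ qᵢ` and `ψ(m, t) = tangentGap f f' P g g' Q m t`. For `x` near the
diagonal let `m = A_{f,p}(x)` and `N = A_{g,q}(x)`. Since `pᵢ/P = qᵢ/Q`, the average of
`ψ(m, xᵢ)` with weights `pᵢ(xᵢ)/P(xᵢ)` is a positive multiple of `(g(N) - g(m)) / g'(m)` (the
`f`-part vanishes by the definition of `m`), so `m ≤ N` once `ψ(m, ·) ≥ 0`.
Now `ψ(m, m) = ∂ₜψ(m, m) = 0`, and `∂ₜ²ψ(a, a)` is the logarithmic derivative of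
`Q²|g'| / (P²|f'|)` at `a`, hence positive. By continuity `∂ₜ²ψ > 0` on a square around `(a, a)`,
on which `ψ(m, ·)` is therefore convex with a critical zero at `m`, hence nonnegative.
-/

open Filter Topology Metric

structure HasDeriv2On (I : Set ℝ) (φ φ' φ'' : ℝ → ℝ) : Prop where
  hasDerivAt : ∀ x ∈ I, HasDerivAt φ (φ' x) x
  hasDerivAt_deriv : ∀ x ∈ I, HasDerivAt φ' (φ'' x) x
  continuousOn_deriv2 : ContinuousOn φ'' I

namespace HasDeriv2On

variable {I : Set ℝ} {φ φ' φ'' : ℝ → ℝ}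

lemma continuousOn (h : HasDeriv2On I φ φ' φ'') : ContinuousOn φ I :=
  fun x hx => (h.hasDerivAt x hx).continuousAt.continuousWithinAt

lemma continuousOn_deriv (h : HasDeriv2On I φ φ' φ'') : ContinuousOn φ' I :=
  fun x hx => (h.hasDerivAt_deriv x hx).continuousAt.continuousWithinAt

lemma sum {ι : Type*} (s : Finset ι) {φ φ' φ'' : ι → ℝ → ℝ}
    (h : ∀ i ∈ s, HasDeriv2On I (φ i) (φ' i) (φ'' i)) :
    HasDeriv2On I (fun x => ∑ i ∈ s, φ i x) (fun x => ∑ i ∈ s, φ' i x)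
      (fun x => ∑ i ∈ s, φ'' i x) where
  hasDerivAt x hx := HasDerivAt.fun_sum fun i hi => (h i hi).hasDerivAt x hx
  hasDerivAt_deriv x hx := HasDerivAt.fun_sum fun i hi => (h i hi).hasDerivAt_deriv x hx
  continuousOn_deriv2 := continuousOn_finsetSum s fun i hi => (h i hi).continuousOn_deriv2

variable {w w' w'' : ℝ → ℝ}

lemma hasDerivAt_mul_sub_div (hw : HasDeriv2On I w w' w'') (hφ : HasDeriv2On I φ φ' φ'')
    (m c : ℝ) {t : ℝ} (ht : t ∈ I) :
    HasDerivAt (fun s => w s * (φ s - φ m) / c) ((w' t * (φ t - φ m) + w t * φ' t) / c) t :=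
  ((hw.hasDerivAt t ht).fun_mul ((hφ.hasDerivAt t ht).sub_const (φ m))).div_const c

lemma hasDerivAt_mul_sub_div_deriv (hw : HasDeriv2On I w w' w'') (hφ : HasDeriv2On I φ φ' φ'')
    (m c : ℝ) {t : ℝ} (ht : t ∈ I) :
    HasDerivAt (fun s => (w' s * (φ s - φ m) + w s * φ' s) / c)
      ((w'' t * (φ t - φ m) + 2 * w' t * φ' t + w t * φ'' t) / c) t := by
  refine ((((hw.hasDerivAt_deriv t ht).fun_mul ((hφ.hasDerivAt t ht).sub_const (φ m))).fun_add
    ((hw.hasDerivAt t ht).fun_mul (hφ.hasDerivAt_deriv t ht))).div_const c).congr_deriv ?_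
  ring

lemma continuousAt_deriv2_div (hI : IsOpen I) (hw : HasDeriv2On I w w' w'')
    (hφ : HasDeriv2On I φ φ' φ'') {a : ℝ} (ha : a ∈ I) (hw0 : w a ≠ 0) (hφ0 : φ' a ≠ 0) :
    ContinuousAt (fun z : ℝ × ℝ =>
      (w'' z.2 * (φ z.2 - φ z.1) + 2 * w' z.2 * φ' z.2 + w z.2 * φ'' z.2) / (φ' z.1 * w z.1))
      (a, a) := by
  have hat : ∀ {u : ℝ → ℝ}, ContinuousOn u I → ContinuousAt u a :=
    fun hu => hu.continuousAt (hI.mem_nhds ha)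
  have h1 := hat hw.continuousOn
  have h2 := hat hw.continuousOn_deriv
  have h3 := hat hw.continuousOn_deriv2
  have h4 := hat hφ.continuousOn
  have h5 := hat hφ.continuousOn_deriv
  have h6 := hat hφ.continuousOn_deriv2
  fun_prop (disch := exact mul_ne_zero hφ0 hw0)

end HasDeriv2On

lemma hasDerivAt_log_sq_mul_abs {u v : ℝ → ℝ} {a u' v' : ℝ} (hu : HasDerivAt u u' a)
    (hv : HasDerivAt v v' a) (hu0 : u a ≠ 0) (hv0 : v a ≠ 0) :
    HasDerivAt (fun y => log (u y ^ 2 * |v y|)) ((2 * u' * v a + u a * v') / (v a * u a)) a := by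
  have hlog : (fun y => log (u y ^ 2 * |v y|)) = fun y => log (u y ^ 2 * v y) := by
    ext y
    rw [← log_abs (u y ^ 2 * v y), abs_mul, abs_sq]
  rw [hlog]
  convert ((hu.fun_pow 2).fun_mul hv).log (mul_ne_zero (pow_ne_zero 2 hu0) hv0) using 1
  simp only [Nat.cast_ofNat]
  field_simp
  ring

lemma pos_of_hasDerivAt_sq_mul_abs_div {P Q f' g' : ℝ → ℝ} {a P' Q' f'' g'' d : ℝ}
    (hP : HasDerivAt P P' a) (hQ : HasDerivAt Q Q' a) (hf : HasDerivAt f' f'' a)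
    (hg : HasDerivAt g' g'' a) (hP0 : P a ≠ 0) (hQ0 : Q a ≠ 0) (hf0 : f' a ≠ 0) (hg0 : g' a ≠ 0)
    (hd : 0 < d) (hR : HasDerivAt (fun y => Q y ^ 2 * |g' y| / (P y ^ 2 * |f' y|)) d a) :
    0 < (2 * Q' * g' a + Q a * g'') / (g' a * Q a) - (2 * P' * f' a + P a * f'') / (f' a * P a) := by
  have hRa : 0 < Q a ^ 2 * |g' a| / (P a ^ 2 * |f' a|) := by positivity
  have hlog := (hasDerivAt_log_sq_mul_abs hQ hg hQ0 hg0).fun_sub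
    (hasDerivAt_log_sq_mul_abs hP hf hP0 hf0)
  rw [hlog.unique ((hR.log hRa.ne').congr_of_eventuallyEq ?_)]
  · exact div_pos hd hRa
  filter_upwards [hP.continuousAt.eventually_ne hP0, hQ.continuousAt.eventually_ne hQ0,
    hf.continuousAt.eventually_ne hf0, hg.continuousAt.eventually_ne hg0] with y hPy hQy hfy hgy
  rw [log_div (by positivity) (by positivity)]

section MonotoneOfDerivNeZero

variable {I : Set ℝ} {f f' : ℝ → ℝ}

lemma strictMonoOn_or_strictAntiOn_of_hasDerivAt_ne_zero (hI : Convex ℝ I)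
    (hf : ∀ x ∈ I, HasDerivAt f (f' x) x) (hf0 : ∀ x ∈ I, f' x ≠ 0) :
    (StrictMonoOn f I ∧ ∀ x ∈ I, 0 < f' x) ∨ (StrictAntiOn f I ∧ ∀ x ∈ I, f' x < 0) := by
  have hc : ContinuousOn f I := fun x hx => (hf x hx).continuousAt.continuousWithinAt
  have hf_int : ∀ x ∈ interior I, HasDerivWithinAt f (f' x) (interior I) x :=
    fun x hx => (hf x (interior_subset hx)).hasDerivWithinAt
  rcases hasDerivWithinAt_forall_lt_or_forall_gt_of_forall_ne hI
    (fun x hx => (hf x hx).hasDerivWithinAt) hf0 with hneg | hpos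
  · exact .inr ⟨strictAntiOn_of_hasDerivWithinAt_neg hI hc hf_int
      fun x hx => hneg x (interior_subset hx), hneg⟩
  · exact .inl ⟨strictMonoOn_of_hasDerivWithinAt_pos hI hc hf_int
      fun x hx => hpos x (interior_subset hx), hpos⟩

lemma injOn_of_hasDerivAt_ne_zero (hI : Convex ℝ I)
    (hf : ∀ x ∈ I, HasDerivAt f (f' x) x) (hf0 : ∀ x ∈ I, f' x ≠ 0) : InjOn f I := by
  rcases strictMonoOn_or_strictAntiOn_of_hasDerivAt_ne_zero hI hf hf0 with h | h
  exacts [h.1.injOn, h.1.injOn]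

lemma le_of_sub_div_deriv_nonneg (hI : Convex ℝ I)
    (hf : ∀ x ∈ I, HasDerivAt f (f' x) x) (hf0 : ∀ x ∈ I, f' x ≠ 0) {x y : ℝ}
    (hx : x ∈ I) (hy : y ∈ I) (h : 0 ≤ (f y - f x) / f' x) : x ≤ y := by
  rcases strictMonoOn_or_strictAntiOn_of_hasDerivAt_ne_zero hI hf hf0 with
    ⟨hmono, hpos⟩ | ⟨hanti, hneg⟩
  · rw [← hmono.le_iff_le hx hy]
    rcases div_nonneg_iff.mp h with h | h <;> linarith [hpos x hx]
  · rw [← hanti.le_iff_ge hy hx]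
    rcases div_nonneg_iff.mp h with h | h <;> linarith [hneg x hx]

end MonotoneOfDerivNeZero

lemma nonneg_of_deriv_eq_zero_of_deriv2_nonneg {J : Set ℝ} (hJ : Convex ℝ J) (hJo : IsOpen J)
    {φ φ' φ'' : ℝ → ℝ} (h1 : ∀ x ∈ J, HasDerivAt φ (φ' x) x)
    (h2 : ∀ x ∈ J, HasDerivAt φ' (φ'' x) x) (h2nonneg : ∀ x ∈ J, 0 ≤ φ'' x)
    {m : ℝ} (hm : m ∈ J) (h0 : φ m = 0) (h1m : φ' m = 0) {t : ℝ} (ht : t ∈ J) : 0 ≤ φ t := by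
  have hconv : ConvexOn ℝ J φ := by
    refine convexOn_of_hasDerivWithinAt2_nonneg (f' := φ') (f'' := φ'') hJ
      (fun x hx => (h1 x hx).continuousAt.continuousWithinAt) ?_ ?_ ?_ <;>
      rw [hJo.interior_eq]
    exacts [fun x hx => (h1 x hx).hasDerivWithinAt, fun x hx => (h2 x hx).hasDerivWithinAt,
      h2nonneg]
  have hderiv : derivWithin φ (Ioi m) m = 0 :=
    ((h1 m hm).hasDerivWithinAt.derivWithin (uniqueDiffWithinAt_Ioi m)).trans h1m
  exact h0 ▸ hconv.isMinOn_of_rightDeriv_eq_zero (hJo.interior_eq.symm ▸ hm) hderiv ht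

section WeightedMean

variable {n : ℕ} [Nonempty (Fin n)] {I J : Set ℝ} {f : ℝ → ℝ} {p : Fin n → ℝ → ℝ}
  {x : Fin n → ℝ}

lemma weightedMean_mem_image (hJ : J.OrdConnected) (hf : ContinuousOn f J)
    (hp : ∀ i, ∀ t ∈ J, 0 < p i t) (hx : ∀ i, x i ∈ J) :
    (∑ i, p i (x i) * f (x i)) / (∑ i, p i (x i)) ∈ f '' J := by
  have hconv : Convex ℝ (f '' J) :=
    ((hJ.isPreconnected.image f hf).ordConnected).convex
  have hmem := hconv.centerMass_mem (t := Finset.univ) (w := fun i => p i (x i))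
    (z := fun i => f (x i)) (fun i _ => (hp i _ (hx i)).le)
    (Finset.sum_pos (fun i _ => hp i _ (hx i)) Finset.univ_nonempty)
    (fun i _ => mem_image_of_mem f (hx i))
  rwa [Finset.centerMass, smul_eq_mul, inv_mul_eq_div] at hmem

lemma bajMean_mem_and_sum_eq_zero (hJ : J.OrdConnected) (hJI : J ⊆ I)
    (hf : ContinuousOn f J) (hinj : InjOn f I) (hp : ∀ i, ∀ t ∈ J, 0 < p i t)
    (hx : ∀ i, x i ∈ J) :
    bajMean I f p x ∈ J ∧ ∑ i, p i (x i) * (f (x i) - f (bajMean I f p x)) = 0 := by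
  obtain ⟨c, hcJ, hfc⟩ := weightedMean_mem_image hJ hf hp hx
  have hex : ∃ b ∈ I, f b = (∑ i, p i (x i) * f (x i)) / (∑ i, p i (x i)) :=
    ⟨c, hJI hcJ, hfc⟩
  have hmean : bajMean I f p x = c :=
    hinj (invFunOn_mem hex) (hJI hcJ) ((invFunOn_eq hex).trans hfc.symm)
  have hP : (∑ i, p i (x i)) ≠ 0 :=
    (Finset.sum_pos (fun i _ => hp i _ (hx i)) Finset.univ_nonempty).ne'
  refine ⟨hmean ▸ hcJ, ?_⟩
  simp only [hmean, mul_sub, Finset.sum_sub_distrib, ← Finset.sum_mul, hfc]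
  field_simp
  ring

end WeightedMean

noncomputable def tangentGap (f f' P g g' Q : ℝ → ℝ) (m t : ℝ) : ℝ :=
  Q t * (g t - g m) / (g' m * Q m) - P t * (f t - f m) / (f' m * P m)

section Comparison

variable {n : ℕ} {f f' g g' : ℝ → ℝ} {p q : Fin n → ℝ → ℝ} {x : Fin n → ℝ}

lemma sum_div_mul_tangentGap {m N : ℝ} (hP : ∀ i, ∑ j, p j (x i) ≠ 0)
    (hQ : ∀ i, ∑ j, q j (x i) ≠ 0)
    (hratio : ∀ i, p i (x i) / (∑ j, p j (x i)) = q i (x i) / (∑ j, q j (x i)))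
    (hfm : ∑ i, p i (x i) * (f (x i) - f m) = 0) (hgN : ∑ i, q i (x i) * (g (x i) - g N) = 0) :
    ∑ i, p i (x i) / (∑ j, p j (x i)) *
        tangentGap f f' (fun t => ∑ j, p j t) g g' (fun t => ∑ j, q j t) m (x i) =
      (g N - g m) / g' m * ((∑ i, q i (x i)) / ∑ j, q j m) := by
  have hterm : ∀ i, p i (x i) / (∑ j, p j (x i)) *
      tangentGap f f' (fun t => ∑ j, p j t) g g' (fun t => ∑ j, q j t) m (x i) =
      q i (x i) * (g (x i) - g m) / (g' m * ∑ j, q j m) -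
        p i (x i) * (f (x i) - f m) / (f' m * ∑ j, p j m) := by
    intro i
    have := hP i
    have := hQ i
    rw [tangentGap, mul_sub]
    congr 1
    · rw [hratio i]
      field_simp
    · field_simp
  have hsum : ∑ i, q i (x i) * (g (x i) - g m) = (∑ i, q i (x i)) * (g N - g m) := by
    simp only [mul_sub, Finset.sum_sub_distrib, ← Finset.sum_mul] at hgN ⊢
    linarith
  simp only [hterm, Finset.sum_sub_distrib, ← Finset.sum_div, hsum, hfm, zero_div, sub_zero]
  ring

variable [Nonempty (Fin n)] {I J : Set ℝ}

lemma bajMean_le_bajMean_of_tangentGap_nonneg (hI : Convex ℝ I) (hJ : J.OrdConnected)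
    (hJI : J ⊆ I) (hf : ∀ t ∈ I, HasDerivAt f (f' t) t) (hf0 : ∀ t ∈ I, f' t ≠ 0)
    (hg : ∀ t ∈ I, HasDerivAt g (g' t) t) (hg0 : ∀ t ∈ I, g' t ≠ 0)
    (hp : ∀ i, ∀ t ∈ J, 0 < p i t) (hq : ∀ i, ∀ t ∈ J, 0 < q i t)
    (hratio : ∀ i, ∀ t ∈ J, p i t / (∑ j, p j t) = q i t / (∑ j, q j t))
    (hgap : ∀ m ∈ J, ∀ t ∈ J,
      0 ≤ tangentGap f f' (fun t => ∑ j, p j t) g g' (fun t => ∑ j, q j t) m t)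
    (hx : ∀ i, x i ∈ J) :
    bajMean I f p x ≤ bajMean I g q x := by
  have hcont : ∀ {φ φ' : ℝ → ℝ}, (∀ t ∈ I, HasDerivAt φ (φ' t) t) → ContinuousOn φ J :=
    fun hφ t ht => (hφ t (hJI ht)).continuousAt.continuousWithinAt
  have hpos : ∀ {r : Fin n → ℝ → ℝ}, (∀ i, ∀ t ∈ J, 0 < r i t) → ∀ t ∈ J, 0 < ∑ j, r j t :=
    fun hr t ht => Finset.sum_pos (fun j _ => hr j t ht) Finset.univ_nonempty
  obtain ⟨hmJ, hfm⟩ := bajMean_mem_and_sum_eq_zero hJ hJI (hcont hf)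
    (injOn_of_hasDerivAt_ne_zero hI hf hf0) hp hx
  obtain ⟨hNJ, hgN⟩ := bajMean_mem_and_sum_eq_zero hJ hJI (hcont hg)
    (injOn_of_hasDerivAt_ne_zero hI hg hg0) hq hx
  have hnonneg := (sum_div_mul_tangentGap (fun i => (hpos hp _ (hx i)).ne')
    (fun i => (hpos hq _ (hx i)).ne') (fun i => hratio i _ (hx i)) hfm hgN).symm.trans_ge <|
    Finset.sum_nonneg fun i _ => mul_nonneg
      (div_nonneg (hp i _ (hx i)).le (hpos hp _ (hx i)).le) (hgap _ hmJ _ (hx i))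
  have hweight : 0 < (∑ i, q i (x i)) / ∑ j, q j (bajMean I f p x) :=
    div_pos (Finset.sum_pos (fun i _ => hq i _ (hx i)) Finset.univ_nonempty) (hpos hq _ hmJ)
  exact le_of_sub_div_deriv_nonneg hI hg hg0 (hJI hmJ) (hJI hNJ)
    (nonneg_of_mul_nonneg_left hnonneg hweight)

end Comparison

section LocalGap

variable {I : Set ℝ} {f f' f'' g g' g'' P P' P'' Q Q' Q'' : ℝ → ℝ}

lemma exists_ball_tangentGap_nonneg (hI : IsOpen I)
    (hf : HasDeriv2On I f f' f'') (hg : HasDeriv2On I g g' g'')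
    (hP : HasDeriv2On I P P' P'') (hQ : HasDeriv2On I Q Q' Q'')
    (hf0 : ∀ x ∈ I, f' x ≠ 0) (hg0 : ∀ x ∈ I, g' x ≠ 0)
    (hP0 : ∀ x ∈ I, 0 < P x) (hQ0 : ∀ x ∈ I, 0 < Q x) {a : ℝ} (ha : a ∈ I)
    (hR : ∃ d, 0 < d ∧ HasDerivAt (fun y => Q y ^ 2 * |g' y| / (P y ^ 2 * |f' y|)) d a) :
    ∃ ε > 0, ball a ε ⊆ I ∧ ∀ m ∈ ball a ε, ∀ t ∈ ball a ε, 0 ≤ tangentGap f f' P g g' Q m t := by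
  -- `K (m, t)` is the second `t`-derivative of `tangentGap f f' P g g' Q m t`
  let K : ℝ × ℝ → ℝ := fun z =>
    (Q'' z.2 * (g z.2 - g z.1) + 2 * Q' z.2 * g' z.2 + Q z.2 * g'' z.2) / (g' z.1 * Q z.1) -
    (P'' z.2 * (f z.2 - f z.1) + 2 * P' z.2 * f' z.2 + P z.2 * f'' z.2) / (f' z.1 * P z.1)
  have hKa : 0 < K (a, a) := by
    obtain ⟨d, hd, hRd⟩ := hR
    simpa [K] using pos_of_hasDerivAt_sq_mul_abs_div (hP.hasDerivAt a ha) (hQ.hasDerivAt a ha)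
      (hf.hasDerivAt_deriv a ha) (hg.hasDerivAt_deriv a ha) (hP0 a ha).ne' (hQ0 a ha).ne'
      (hf0 a ha) (hg0 a ha) hd hRd
  have hKc : ContinuousAt K (a, a) :=
    (hQ.continuousAt_deriv2_div hI hg ha (hQ0 a ha).ne' (hg0 a ha)).sub
      (hP.continuousAt_deriv2_div hI hf ha (hP0 a ha).ne' (hf0 a ha))
  obtain ⟨ε, hε, hball⟩ := Metric.eventually_nhds_iff_ball.mp
    ((hKc.eventually (lt_mem_nhds hKa)).and ((hI.prod hI).mem_nhds ⟨ha, ha⟩))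
  have hmem : ∀ {m t}, m ∈ ball a ε → t ∈ ball a ε → 0 < K (m, t) ∧ (m, t) ∈ I ×ˢ I :=
    fun hm ht => hball _ (ball_prod_same a a ε ▸ ⟨hm, ht⟩)
  have hsub : ball a ε ⊆ I := fun t ht => (hmem ht ht).2.1
  refine ⟨ε, hε, hsub, fun m hm t ht => ?_⟩
  have hmI := hsub hm
  have := hQ0 m hmI; have := hP0 m hmI; have := hf0 m hmI; have := hg0 m hmI
  refine nonneg_of_deriv_eq_zero_of_deriv2_nonneg (convex_ball a ε) isOpen_ball
    (fun s hs => (hQ.hasDerivAt_mul_sub_div hg m _ (hsub hs)).sub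
      (hP.hasDerivAt_mul_sub_div hf m _ (hsub hs)))
    (fun s hs => (hQ.hasDerivAt_mul_sub_div_deriv hg m _ (hsub hs)).sub
      (hP.hasDerivAt_mul_sub_div_deriv hf m _ (hsub hs)))
    (fun s hs => (hmem hm hs).1.le) hm (by simp) ?_ ht
  field_simp
  ring

end LocalGap

lemma locallySmaller_of_eventually {n : ℕ} {I : Set ℝ} {M N : (Fin n → ℝ) → ℝ}
    (h : ∀ a ∈ I, ∀ᶠ x in 𝓝 (fun _ => a), (∀ i, x i ∈ I) ∧ M x ≤ N x) :
    LocallySmaller I M N :=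
  ⟨interior {x | (∀ i, x i ∈ I) ∧ M x ≤ N x}, isOpen_interior,
    fun _ hx => (interior_subset hx).1, fun a ha => mem_interior_iff_mem_nhds.mpr (h a ha),
    fun _ hx => (interior_subset hx).2⟩

theorem stmt7_general {n : ℕ} (hn : 2 ≤ n) (I : Set ℝ) (hIopen : IsOpen I)
    (hIconn : I.OrdConnected)
    (f f' f'' g g' g'' : ℝ → ℝ) (p p' p'' q q' q'' : Fin n → ℝ → ℝ)
    (hf : ∀ x ∈ I, HasDerivAt f (f' x) x) (hf2 : ∀ x ∈ I, HasDerivAt f' (f'' x) x)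
    (hf2c : ContinuousOn f'' I) (hf'0 : ∀ x ∈ I, f' x ≠ 0)
    (hg : ∀ x ∈ I, HasDerivAt g (g' x) x) (hg2 : ∀ x ∈ I, HasDerivAt g' (g'' x) x)
    (hg2c : ContinuousOn g'' I) (hg'0 : ∀ x ∈ I, g' x ≠ 0)
    (hp : ∀ i, ∀ x ∈ I, 0 < p i x) (hq : ∀ i, ∀ x ∈ I, 0 < q i x)
    (hpd : ∀ i, ∀ x ∈ I, HasDerivAt (p i) (p' i x) x)
    (hpd2 : ∀ i, ∀ x ∈ I, HasDerivAt (p' i) (p'' i x) x)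
    (hpd2c : ∀ i, ContinuousOn (p'' i) I)
    (hqd : ∀ i, ∀ x ∈ I, HasDerivAt (q i) (q' i x) x)
    (hqd2 : ∀ i, ∀ x ∈ I, HasDerivAt (q' i) (q'' i x) x)
    (hqd2c : ∀ i, ContinuousOn (q'' i) I)
    (hratio : ∀ i : Fin n, ∀ x ∈ I, p i x / (∑ j, p j x) = q i x / (∑ j, q j x))
    (hposder : ∀ x ∈ I, ∃ d : ℝ, 0 < d ∧
      HasDerivAt (fun y => (∑ j, q j y) ^ 2 * |g' y| / ((∑ j, p j y) ^ 2 * |f' y|)) d x) :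
    LocallySmaller I (bajMean I f p) (bajMean I g q) := by
  have : Nonempty (Fin n) := ⟨⟨0, by omega⟩⟩
  have hP := HasDeriv2On.sum Finset.univ fun i _ => ⟨hpd i, hpd2 i, hpd2c i⟩
  have hQ := HasDeriv2On.sum Finset.univ fun i _ => ⟨hqd i, hqd2 i, hqd2c i⟩
  have hsum_pos : ∀ {r : Fin n → ℝ → ℝ}, (∀ i, ∀ x ∈ I, 0 < r i x) → ∀ x ∈ I, 0 < ∑ j, r j x :=
    fun hr x hx => Finset.sum_pos (fun j _ => hr j x hx) Finset.univ_nonempty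
  refine locallySmaller_of_eventually fun a ha => ?_
  obtain ⟨ε, hε, hsub, hgap⟩ := exists_ball_tangentGap_nonneg hIopen ⟨hf, hf2, hf2c⟩
    ⟨hg, hg2, hg2c⟩ hP hQ hf'0 hg'0 (hsum_pos hp) (hsum_pos hq) ha (hposder a ha)
  filter_upwards [set_pi_mem_nhds finite_univ fun i _ => ball_mem_nhds a hε] with x hx
  have hxε : ∀ i, x i ∈ ball a ε := fun i => hx i (mem_univ i)
  exact ⟨fun i => hsub (hxε i), bajMean_le_bajMean_of_tangentGap_nonneg hIconn.convex
    (convex_ball a ε).ordConnected hsub hf hf'0 hg hg'0 (fun i t ht => hp i t (hsub ht))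
    (fun i t ht => hq i t (hsub ht)) (fun i t ht => hratio i t (hsub ht)) hgap hxε⟩

/-- Theorem 1NC, sufficiency part: if `f, g` are twice continuously differentiable with
nonvanishing first derivatives, `p, q : I → ℝ₊ⁿ` are twice continuously differentiable,
`pᵢ/p₀ = qᵢ/q₀` on `I` for all `i`, and `q₀²|g'|/(p₀²|f'|)` has an everywhere positive
derivative on `I`, then `A_{f,p}` is locally smaller than `A_{g,q}`. -/
theorem stmt7 {n : ℕ} (hn : 2 ≤ n) (I : Set ℝ) (hIopen : IsOpen I)
    (hIconn : I.OrdConnected) (hIne : I.Nonempty)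
    (f f' f'' g g' g'' : ℝ → ℝ) (p p' p'' q q' q'' : Fin n → ℝ → ℝ)
    (hf : ∀ x ∈ I, HasDerivAt f (f' x) x) (hf2 : ∀ x ∈ I, HasDerivAt f' (f'' x) x)
    (hf2c : ContinuousOn f'' I) (hf'0 : ∀ x ∈ I, f' x ≠ 0)
    (hg : ∀ x ∈ I, HasDerivAt g (g' x) x) (hg2 : ∀ x ∈ I, HasDerivAt g' (g'' x) x)
    (hg2c : ContinuousOn g'' I) (hg'0 : ∀ x ∈ I, g' x ≠ 0)
    (hp : ∀ i, ∀ x ∈ I, 0 < p i x) (hq : ∀ i, ∀ x ∈ I, 0 < q i x)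
    (hpd : ∀ i, ∀ x ∈ I, HasDerivAt (p i) (p' i x) x)
    (hpd2 : ∀ i, ∀ x ∈ I, HasDerivAt (p' i) (p'' i x) x)
    (hpd2c : ∀ i, ContinuousOn (p'' i) I)
    (hqd : ∀ i, ∀ x ∈ I, HasDerivAt (q i) (q' i x) x)
    (hqd2 : ∀ i, ∀ x ∈ I, HasDerivAt (q' i) (q'' i x) x)
    (hqd2c : ∀ i, ContinuousOn (q'' i) I)
    (hratio : ∀ i : Fin n, ∀ x ∈ I, p i x / (∑ j, p j x) = q i x / (∑ j, q j x))
    (hposder : ∀ x ∈ I, ∃ d : ℝ, 0 < d ∧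
      HasDerivAt (fun y => (∑ j, q j y) ^ 2 * |g' y| / ((∑ j, p j y) ^ 2 * |f' y|)) d x) :
    LocallySmaller I (bajMean I f p) (bajMean I g q) :=
  stmt7_general hn I hIopen hIconn f f' f'' g g' g'' p p' p'' q q' q'' hf hf2 hf2c hf'0 hg hg2 hg2c
    hg'0 hp hq hpd hpd2 hpd2c hqd hqd2 hqd2c hratio hposder
end

section
/- Let I ⊆ (0,∞) be a nonempty open interval, let f, g : I → ℝ be twice continuously differentiable with nowhere vanishing first derivatives, let n ≥ 2, let λ_1,…,λ_n, μ_1,…,μ_n > 0 and α_1,…,α_n, β_1,…,β_n ∈ ℝ, and define p_i(x) := λ_i x^{α_i} and q_i(x) := μ_i x^{β_i} for i ∈ {1,…,n} and x ∈ I. If there exist γ > 0 and δ ∈ ℝ such that μ_i = γ λ_i and β_i = α_i + δ for all i ∈ {1,…,n}, and the function x ↦ x^{2δ} |g'(x)| / |f'(x)| has an everywhere positive derivative on I, then A_{f,p} is locally smaller than A_{g,q}. -/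
/-!
Write `y = A_{f,p}(x)` and `w(t) = γ t^δ`, so that `qᵢ = w pᵢ`. For increasing `g`,
`A_{g,q}(x) ≥ y` as soon as `∑ pᵢ(xᵢ) w(xᵢ) (g(xᵢ) - g(y)) ≥ 0`, and since
`∑ pᵢ(xᵢ) (f(xᵢ) - f(y)) = 0` this follows from the nonnegativity of the gap
`t ↦ w(t) (g(t) - g(u)) - K(u) (f(t) - f(u))` at `u = y`, where `K(u) = w(u) g'(u) / f'(u)` makes
`t = u` a double zero. On the diagonal the second `t`-derivative of the gap is
`(f' / w) · (w² g' / f')'`, positive by hypothesis; by continuity it stays positive for `u, t`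
near any `m ∈ I`, so there the gap is convex in `t` and hence nonnegative.
Replacing `f` or `g` by its negative does not change the mean, which reduces everything to
`f', g' > 0`.
-/

open Set Function Real

open Metric Filter Topology

lemma exists_mul_eq_abs_of_ne_zero {s : Set ℝ} (hs : IsPreconnected s) {h : ℝ → ℝ}
    (hc : ContinuousOn h s) (h0 : ∀ x ∈ s, h x ≠ 0) :
    ∃ σ : ℝ, ∀ x ∈ s, σ * h x = |h x| := by
  rcases hs.eq_or_eq_neg_of_sq_eq hc.abs hc (fun x _ => by simp [sq_abs]) (h0 _) with hh | hh
  · exact ⟨1, fun x hx => (one_mul (h x)).trans (hh hx).symm⟩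
  · exact ⟨-1, fun x hx => (neg_one_mul (h x)).trans (hh hx).symm⟩

lemma strictMonoOn_of_hasDerivAt_pos {D : Set ℝ} (hD : Convex ℝ D) {f f' : ℝ → ℝ}
    (hf : ∀ x ∈ D, HasDerivAt f (f' x) x) (hf' : ∀ x ∈ D, 0 < f' x) : StrictMonoOn f D :=
  strictMonoOn_of_hasDerivWithinAt_pos hD
    (fun x hx => (hf x hx).continuousAt.continuousWithinAt)
    (fun x hx => (hf x (interior_subset hx)).hasDerivWithinAt)
    (fun x hx => hf' x (interior_subset hx))

lemma isMinOn_of_hasDerivAt2_nonneg {S : Set ℝ} (hSo : IsOpen S) (hS : Convex ℝ S)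
    {φ φ' φ'' : ℝ → ℝ} (hφ : ∀ x ∈ S, HasDerivAt φ (φ' x) x)
    (hφ' : ∀ x ∈ S, HasDerivAt φ' (φ'' x) x) (hφ'' : ∀ x ∈ S, 0 ≤ φ'' x) {u : ℝ}
    (hu : u ∈ S) (hu' : φ' u = 0) : IsMinOn φ S u := by
  have hconv : ConvexOn ℝ S φ := by
    refine convexOn_of_hasDerivWithinAt2_nonneg (f' := φ') (f'' := φ'') hS
      (fun x hx => (hφ x hx).continuousAt.continuousWithinAt) ?_ ?_ ?_ <;>
      rw [hSo.interior_eq]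
    exacts [fun x hx => (hφ x hx).hasDerivWithinAt, fun x hx => (hφ' x hx).hasDerivWithinAt,
      hφ'']
  refine hconv.isMinOn_of_rightDeriv_eq_zero (by rwa [hSo.interior_eq]) ?_
  rw [(hφ u hu).hasDerivWithinAt.derivWithin (uniqueDiffWithinAt_Ioi u), hu']

lemma exists_ball_forall_pos_of_continuousAt {α : Type*} [PseudoMetricSpace α]
    {F : α → α → ℝ} {m : α} (hF : ContinuousAt (uncurry F) (m, m)) (hm : 0 < F m m)
    {s : Set α} (hs : s ∈ 𝓝 m) :
    ∃ ε > 0, ball m ε ⊆ s ∧ ∀ u ∈ ball m ε, ∀ t ∈ ball m ε, 0 < F u t := by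
  have hev : ∀ᶠ q in 𝓝 m ×ˢ 𝓝 m, 0 < F q.1 q.2 := by
    rw [← nhds_prod_eq]; exact hF.eventually (Ioi_mem_nhds hm)
  obtain ⟨t, ht, hFt⟩ := eventually_prod_self_iff (r := fun u t => 0 < F u t) |>.1 hev
  obtain ⟨ε, hε, hball⟩ := Metric.mem_nhds_iff.1 (inter_mem ht hs)
  exact ⟨ε, hε, fun x hx => (hball hx).2, fun u hu t ht => hFt u (hball hu).1 t (hball ht).1⟩

lemma locallySmaller_of_forall_ball {n : ℕ} {I : Set ℝ} {M N : (Fin n → ℝ) → ℝ}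
    (h : ∀ m ∈ I, ∃ ε > 0, ball m ε ⊆ I ∧
      ∀ x : Fin n → ℝ, (∀ i, x i ∈ ball m ε) → M x ≤ N x) :
    LocallySmaller I M N := by
  choose! ε hε hεI hMN using h
  have hmem : ∀ m, ∀ x ∈ ball (fun _ : Fin n => m) (ε m), ∀ i, x i ∈ ball m (ε m) :=
    fun m x hx i => (dist_le_pi_dist x _ i).trans_lt hx
  refine ⟨⋃ m ∈ I, ball (fun _ => m) (ε m), isOpen_biUnion fun _ _ => isOpen_ball, ?_, ?_,
    ?_⟩
  · simp only [subset_def, mem_iUnion₂]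
    rintro x ⟨m, hm, hx⟩ i
    exact hεI m hm (hmem m x hx i)
  · exact fun m hm => mem_biUnion hm (mem_ball_self (hε m hm))
  · simp only [mem_iUnion₂]
    rintro x ⟨m, hm, hx⟩
    exact hMN m hm x (hmem m x hx)

lemma LocallySmaller.congr {n : ℕ} {I : Set ℝ} {M N M' N' : (Fin n → ℝ) → ℝ}
    (h : LocallySmaller I M N) (hM : ∀ x : Fin n → ℝ, (∀ i, x i ∈ I) → M x = M' x)
    (hN : ∀ x : Fin n → ℝ, (∀ i, x i ∈ I) → N x = N' x) : LocallySmaller I M' N' := by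
  obtain ⟨U, hU, hUI, hdiag, hle⟩ := h
  exact ⟨U, hU, hUI, hdiag, fun x hx => hM x (hUI hx) ▸ hN x (hUI hx) ▸ hle x hx⟩

lemma div_sum_mem_of_ordConnected {ι : Type*} [Fintype ι] [Nonempty ι] {S : Set ℝ}
    (hS : S.OrdConnected) {c u : ι → ℝ} (hc : ∀ i, 0 < c i) (hu : ∀ i, u i ∈ S) :
    (∑ i, c i * u i) / ∑ i, c i ∈ S := by
  have := hS.convex.centerMass_mem (t := Finset.univ) (fun i _ => (hc i).le)
    (Finset.sum_pos (fun i _ => hc i) Finset.univ_nonempty) (fun i _ => hu i)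
  rwa [Finset.centerMass, smul_eq_mul, inv_mul_eq_div] at this

lemma sum_mul_sub_div_sum_eq_zero {ι : Type*} (s : Finset ι) (c u : ι → ℝ)
    (hc : ∑ i ∈ s, c i ≠ 0) :
    ∑ i ∈ s, c i * (u i - (∑ j ∈ s, c j * u j) / ∑ j ∈ s, c j) = 0 := by
  simp only [mul_sub, Finset.sum_sub_distrib, ← Finset.sum_mul, mul_div_cancel₀ _ hc, sub_self]

section BajMean

variable {n : ℕ} [Nonempty (Fin n)] {I J : Set ℝ} {f g w : ℝ → ℝ} {p q : Fin n → ℝ → ℝ}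
  {x : Fin n → ℝ}

lemma bajMean_mem_and_apply_eq (hJ : IsPreconnected J) (hJI : J ⊆ I) (hfc : ContinuousOn f J)
    (hf : InjOn f I) (hp : ∀ i, 0 < p i (x i)) (hx : ∀ i, x i ∈ J) :
    bajMean I f p x ∈ J ∧
      f (bajMean I f p x) = (∑ i, p i (x i) * f (x i)) / ∑ i, p i (x i) := by
  obtain ⟨y, hyJ, hfy⟩ := div_sum_mem_of_ordConnected (hJ.image f hfc).ordConnected hp
    (fun i => mem_image_of_mem f (hx i))
  rw [bajMean, ← hfy, hf.leftInvOn_invFunOn (hJI hyJ)]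
  exact ⟨hyJ, rfl⟩

lemma bajMean_const_mul {c : ℝ} (hI : IsPreconnected I) (hfc : ContinuousOn f I)
    (hcf : InjOn (fun t => c * f t) I) (hp : ∀ i, 0 < p i (x i)) (hx : ∀ i, x i ∈ I) :
    bajMean I (fun t => c * f t) p x = bajMean I f p x := by
  have hf : InjOn f I := fun a ha b hb hab => hcf ha hb (congrArg (c * ·) hab)
  obtain ⟨hyI, hfy⟩ := bajMean_mem_and_apply_eq hI subset_rfl hfc hf hp hx
  have hcfy :
      (∑ i, p i (x i) * (c * f (x i))) / ∑ i, p i (x i) = c * f (bajMean I f p x) := by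
    rw [hfy, mul_div_assoc', Finset.mul_sum]
    simp only [mul_left_comm]
  rw [bajMean, hcfy]
  exact hcf.leftInvOn_invFunOn hyI

lemma bajMean_le_bajMean_of_forall_mul_sub_le {K : ℝ → ℝ} (hJ : IsPreconnected J)
    (hJI : J ⊆ I) (hfc : ContinuousOn f J) (hf : InjOn f I) (hgc : ContinuousOn g J)
    (hg : StrictMonoOn g I) (hw : ∀ t ∈ I, 0 < w t) (hp : ∀ i, ∀ t ∈ I, 0 < p i t)
    (hq : ∀ i, ∀ t ∈ I, q i t = w t * p i t)
    (hK : ∀ u ∈ J, ∀ t ∈ J, K u * (f t - f u) ≤ w t * (g t - g u)) (hx : ∀ i, x i ∈ J) :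
    bajMean I f p x ≤ bajMean I g q x := by
  have hxI i : x i ∈ I := hJI (hx i)
  have hp_pos i : 0 < p i (x i) := hp i _ (hxI i)
  have hq_pos i : 0 < q i (x i) := hq i _ (hxI i) ▸ mul_pos (hw _ (hxI i)) (hp_pos i)
  obtain ⟨hyJ, hfy⟩ := bajMean_mem_and_apply_eq hJ hJI hfc hf hp_pos hx
  obtain ⟨hzJ, hgz⟩ := bajMean_mem_and_apply_eq hJ hJI hgc hg.injOn hq_pos hx
  set y := bajMean I f p x
  set z := bajMean I g q x
  have hfsum : ∑ i, p i (x i) * (f (x i) - f y) = 0 := by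
    rw [hfy]
    exact sum_mul_sub_div_sum_eq_zero _ _ _
      (Finset.sum_pos (fun i _ => hp_pos i) Finset.univ_nonempty).ne'
  have hq_sum : 0 < ∑ i, q i (x i) := Finset.sum_pos (fun i _ => hq_pos i) Finset.univ_nonempty
  have hgsum : ∑ i, q i (x i) * (g (x i) - g z) = 0 := by
    rw [hgz]
    exact sum_mul_sub_div_sum_eq_zero _ _ _ hq_sum.ne'
  have key : 0 ≤ (∑ i, q i (x i)) * (g z - g y) := by
    calc 0 = K y * ∑ i, p i (x i) * (f (x i) - f y) := by rw [hfsum, mul_zero]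
      _ ≤ ∑ i, p i (x i) * (w (x i) * (g (x i) - g y)) := by
        rw [Finset.mul_sum]
        refine Finset.sum_le_sum fun i _ => ?_
        rw [mul_left_comm]
        exact mul_le_mul_of_nonneg_left (hK y hyJ _ (hx i)) (hp_pos i).le
      _ = ∑ i, q i (x i) * (g (x i) - g y) - ∑ i, q i (x i) * (g (x i) - g z) := by
        rw [hgsum, sub_zero]
        refine Finset.sum_congr rfl fun i _ => ?_
        rw [hq i _ (hxI i)]; ring
      _ = (∑ i, q i (x i)) * (g z - g y) := by
        rw [← Finset.sum_sub_distrib, Finset.sum_mul]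
        exact Finset.sum_congr rfl fun i _ => by ring
  have hgyz : g y ≤ g z := sub_nonneg.1 (nonneg_of_mul_nonneg_right key hq_sum)
  exact (hg.le_iff_le (hJI hyJ) (hJI hzJ)).1 hgyz

end BajMean

section Calculus

variable {I : Set ℝ} {f f' f'' g g' g'' w w' w'' : ℝ → ℝ}

/-- The second derivative in `t` of `w t * (g t - g u) - w u * g' u / f' u * (f t - f u)`. -/
noncomputable def gapDeriv2 (f' f'' g g' g'' w w' w'' : ℝ → ℝ) (u t : ℝ) : ℝ :=
  w'' t * (g t - g u) + 2 * (w' t * g' t) + w t * g'' t - w u * g' u / f' u * f'' t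

lemma hasDerivAt_sq_mul_div {m : ℝ} (hw : HasDerivAt w (w' m) m)
    (hg' : HasDerivAt g' (g'' m) m) (hf' : HasDerivAt f' (f'' m) m) (hm : f' m ≠ 0) :
    HasDerivAt (fun y => w y ^ 2 * g' y / f' y)
      (w m / f' m * gapDeriv2 f' f'' g g' g'' w w' w'' m m) m := by
  refine (((hw.pow 2).mul hg').div hf' hm).congr_deriv ?_
  simp only [gapDeriv2, sub_self, mul_zero, zero_add, Pi.pow_apply, Pi.mul_apply]
  field_simp
  ring

lemma continuousAt_gapDeriv2 {m : ℝ} (hf' : ContinuousAt f' m) (hf'' : ContinuousAt f'' m)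
    (hg : ContinuousAt g m) (hg' : ContinuousAt g' m) (hg'' : ContinuousAt g'' m)
    (hw : ContinuousAt w m) (hw' : ContinuousAt w' m) (hw'' : ContinuousAt w'' m)
    (hm : f' m ≠ 0) :
    ContinuousAt (uncurry (gapDeriv2 f' f'' g g' g'' w w' w'')) (m, m) := by
  unfold gapDeriv2 uncurry
  fun_prop (disch := exact hm)

lemma exists_ball_forall_mul_sub_le (hI : IsOpen I)
    (hf : ∀ x ∈ I, HasDerivAt f (f' x) x) (hf2 : ∀ x ∈ I, HasDerivAt f' (f'' x) x)
    (hf2c : ContinuousOn f'' I) (hf'0 : ∀ x ∈ I, f' x ≠ 0)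
    (hg : ∀ x ∈ I, HasDerivAt g (g' x) x) (hg2 : ∀ x ∈ I, HasDerivAt g' (g'' x) x)
    (hg2c : ContinuousOn g'' I)
    (hw : ∀ x ∈ I, HasDerivAt w (w' x) x) (hw2 : ∀ x ∈ I, HasDerivAt w' (w'' x) x)
    (hw2c : ContinuousOn w'' I) {m : ℝ} (hmI : m ∈ I)
    (hm : 0 < gapDeriv2 f' f'' g g' g'' w w' w'' m m) :
    ∃ ε > 0, ball m ε ⊆ I ∧ ∀ u ∈ ball m ε, ∀ t ∈ ball m ε,
      w u * g' u / f' u * (f t - f u) ≤ w t * (g t - g u) := by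
  have hcont := continuousAt_gapDeriv2 (hf2 m hmI).continuousAt
    (hf2c.continuousAt (hI.mem_nhds hmI)) (hg m hmI).continuousAt (hg2 m hmI).continuousAt
    (hg2c.continuousAt (hI.mem_nhds hmI)) (hw m hmI).continuousAt (hw2 m hmI).continuousAt
    (hw2c.continuousAt (hI.mem_nhds hmI)) (hf'0 m hmI)
  obtain ⟨ε, hε, hεI, hpos⟩ :=
    exists_ball_forall_pos_of_continuousAt hcont hm (hI.mem_nhds hmI)
  refine ⟨ε, hε, hεI, fun u hu t ht => ?_⟩
  set K := w u * g' u / f' u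
  have hφ : ∀ t ∈ ball m ε, HasDerivAt (fun t => w t * (g t - g u) - K * (f t - f u))
      (w' t * (g t - g u) + w t * g' t - K * f' t) t := fun t ht =>
    ((hw t (hεI ht)).mul ((hg t (hεI ht)).sub_const _)).sub
      (((hf t (hεI ht)).sub_const _).const_mul K)
  have hφ' : ∀ t ∈ ball m ε, HasDerivAt (fun t => w' t * (g t - g u) + w t * g' t - K * f' t)
      (gapDeriv2 f' f'' g g' g'' w w' w'' u t) t := fun t ht => by
    refine ((((hw2 t (hεI ht)).mul ((hg t (hεI ht)).sub_const _)).add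
      ((hw t (hεI ht)).mul (hg2 t (hεI ht)))).sub
      ((hf2 t (hεI ht)).const_mul K)).congr_deriv ?_
    rw [gapDeriv2]
    ring
  have hK : w' u * (g u - g u) + w u * g' u - K * f' u = 0 := by
    rw [sub_self, mul_zero, zero_add, div_mul_cancel₀ _ (hf'0 u (hεI hu)), sub_self]
  have hmin := isMinOn_of_hasDerivAt2_nonneg isOpen_ball (convex_ball m ε) hφ hφ'
    (fun t ht => (hpos u hu t ht).le) hu hK ht
  simp only [mem_ofPred_eq, sub_self, mul_zero] at hmin
  linarith

end Calculus

theorem locallySmaller_bajMean_of_deriv_pos {n : ℕ} [Nonempty (Fin n)] {I : Set ℝ}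
    (hIopen : IsOpen I) (hIconv : Convex ℝ I) {f f' f'' g g' g'' w w' w'' : ℝ → ℝ}
    (hf : ∀ x ∈ I, HasDerivAt f (f' x) x) (hf2 : ∀ x ∈ I, HasDerivAt f' (f'' x) x)
    (hf2c : ContinuousOn f'' I) (hf'pos : ∀ x ∈ I, 0 < f' x)
    (hg : ∀ x ∈ I, HasDerivAt g (g' x) x) (hg2 : ∀ x ∈ I, HasDerivAt g' (g'' x) x)
    (hg2c : ContinuousOn g'' I) (hg'pos : ∀ x ∈ I, 0 < g' x)
    (hw : ∀ x ∈ I, HasDerivAt w (w' x) x) (hw2 : ∀ x ∈ I, HasDerivAt w' (w'' x) x)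
    (hw2c : ContinuousOn w'' I) (hwpos : ∀ x ∈ I, 0 < w x)
    {p q : Fin n → ℝ → ℝ} (hp : ∀ i, ∀ x ∈ I, 0 < p i x)
    (hq : ∀ i, ∀ x ∈ I, q i x = w x * p i x)
    (hder : ∀ x ∈ I, ∃ d, 0 < d ∧ HasDerivAt (fun y => w y ^ 2 * g' y / f' y) d x) :
    LocallySmaller I (bajMean I f p) (bajMean I g q) := by
  have hfc : ContinuousOn f I := fun x hx => (hf x hx).continuousAt.continuousWithinAt
  have hgc : ContinuousOn g I := fun x hx => (hg x hx).continuousAt.continuousWithinAt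
  have hfmono := strictMonoOn_of_hasDerivAt_pos hIconv hf hf'pos
  have hgmono := strictMonoOn_of_hasDerivAt_pos hIconv hg hg'pos
  refine locallySmaller_of_forall_ball fun m hm => ?_
  obtain ⟨d, hd, hdm⟩ := hder m hm
  have hgap : 0 < gapDeriv2 f' f'' g g' g'' w w' w'' m m := by
    have hd_eq := (hasDerivAt_sq_mul_div (g := g) (w'' := w'') (hw m hm) (hg2 m hm) (hf2 m hm)
      (hf'pos m hm).ne').unique hdm
    exact pos_of_mul_pos_right (hd_eq ▸ hd) (div_pos (hwpos m hm) (hf'pos m hm)).le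
  obtain ⟨ε, hε, hεI, hK⟩ := exists_ball_forall_mul_sub_le hIopen hf hf2 hf2c
    (fun x hx => (hf'pos x hx).ne') hg hg2 hg2c hw hw2 hw2c hm hgap
  exact ⟨ε, hε, hεI, fun x hx => bajMean_le_bajMean_of_forall_mul_sub_le
    (convex_ball m ε).isPreconnected hεI (hfc.mono hεI) hfmono.injOn (hgc.mono hεI) hgmono hwpos
    hp hq hK hx⟩

theorem locallySmaller_bajMean {n : ℕ} [Nonempty (Fin n)] {I : Set ℝ}
    (hIopen : IsOpen I) (hIconv : Convex ℝ I) {f f' f'' g g' g'' w w' w'' : ℝ → ℝ}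
    (hf : ∀ x ∈ I, HasDerivAt f (f' x) x) (hf2 : ∀ x ∈ I, HasDerivAt f' (f'' x) x)
    (hf2c : ContinuousOn f'' I) (hf'0 : ∀ x ∈ I, f' x ≠ 0)
    (hg : ∀ x ∈ I, HasDerivAt g (g' x) x) (hg2 : ∀ x ∈ I, HasDerivAt g' (g'' x) x)
    (hg2c : ContinuousOn g'' I) (hg'0 : ∀ x ∈ I, g' x ≠ 0)
    (hw : ∀ x ∈ I, HasDerivAt w (w' x) x) (hw2 : ∀ x ∈ I, HasDerivAt w' (w'' x) x)
    (hw2c : ContinuousOn w'' I) (hwpos : ∀ x ∈ I, 0 < w x)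
    {p q : Fin n → ℝ → ℝ} (hp : ∀ i, ∀ x ∈ I, 0 < p i x)
    (hq : ∀ i, ∀ x ∈ I, q i x = w x * p i x)
    (hder : ∀ x ∈ I, ∃ d, 0 < d ∧ HasDerivAt (fun y => w y ^ 2 * |g' y| / |f' y|) d x) :
    LocallySmaller I (bajMean I f p) (bajMean I g q) := by
  obtain ⟨σ, hσ⟩ := exists_mul_eq_abs_of_ne_zero hIconv.isPreconnected
    (fun x hx => (hf2 x hx).continuousAt.continuousWithinAt) hf'0
  obtain ⟨s, hs⟩ := exists_mul_eq_abs_of_ne_zero hIconv.isPreconnected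
    (fun x hx => (hg2 x hx).continuousAt.continuousWithinAt) hg'0
  have hσf' x (hx : x ∈ I) : 0 < σ * f' x := hσ x hx ▸ abs_pos.2 (hf'0 x hx)
  have hsg' x (hx : x ∈ I) : 0 < s * g' x := hs x hx ▸ abs_pos.2 (hg'0 x hx)
  have hσf x (hx : x ∈ I) := (hf x hx).const_mul σ
  have hsg x (hx : x ∈ I) := (hg x hx).const_mul s
  have hder' : ∀ x ∈ I, ∃ d, 0 < d ∧
      HasDerivAt (fun y => w y ^ 2 * (s * g' y) / (σ * f' y)) d x := by
    refine fun x hx => (hder x hx).imp fun d ⟨hd, hdx⟩ => ⟨hd, hdx.congr_of_eventuallyEq ?_⟩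
    filter_upwards [hIopen.mem_nhds hx] with y hy
    rw [hσ y hy, hs y hy]
  refine (locallySmaller_bajMean_of_deriv_pos hIopen hIconv hσf
    (fun x hx => (hf2 x hx).const_mul σ) (hf2c.const_mul σ) hσf' hsg
    (fun x hx => (hg2 x hx).const_mul s) (hg2c.const_mul s) hsg' hw hw2 hw2c hwpos hp hq
    hder').congr ?_ ?_ <;> intro x hx
  · exact bajMean_const_mul hIconv.isPreconnected
      (fun x hx => (hf x hx).continuousAt.continuousWithinAt)
      (strictMonoOn_of_hasDerivAt_pos hIconv hσf hσf').injOn (fun i => hp i _ (hx i)) hx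
  · exact bajMean_const_mul hIconv.isPreconnected
      (fun x hx => (hg x hx).continuousAt.continuousWithinAt)
      (strictMonoOn_of_hasDerivAt_pos hIconv hsg hsg').injOn
      (fun i => hq i _ (hx i) ▸ mul_pos (hwpos _ (hx i)) (hp i _ (hx i))) hx

theorem stmt10_general {n : ℕ} (hn : 2 ≤ n) (I : Set ℝ) (hIopen : IsOpen I)
    (hIconn : I.OrdConnected) (hIpos : I ⊆ Set.Ioi (0 : ℝ))
    (f f' f'' g g' g'' : ℝ → ℝ)
    (hf : ∀ x ∈ I, HasDerivAt f (f' x) x) (hf2 : ∀ x ∈ I, HasDerivAt f' (f'' x) x)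
    (hf2c : ContinuousOn f'' I) (hf'0 : ∀ x ∈ I, f' x ≠ 0)
    (hg : ∀ x ∈ I, HasDerivAt g (g' x) x) (hg2 : ∀ x ∈ I, HasDerivAt g' (g'' x) x)
    (hg2c : ContinuousOn g'' I) (hg'0 : ∀ x ∈ I, g' x ≠ 0)
    (lam mu : Fin n → ℝ) (al be : Fin n → ℝ)
    (hlam : ∀ i, 0 < lam i)
    (γ δ : ℝ) (hγ : 0 < γ)
    (hrel : ∀ i : Fin n, mu i = γ * lam i ∧ be i = al i + δ)
    (hposder : ∀ x ∈ I, ∃ d : ℝ, 0 < d ∧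
      HasDerivAt (fun y => y ^ (2 * δ) * |g' y| / |f' y|) d x) :
    LocallySmaller I (bajMean I f (fun i x => lam i * x ^ al i))
      (bajMean I g (fun i x => mu i * x ^ be i)) := by
  have : Nonempty (Fin n) := ⟨⟨0, by omega⟩⟩
  have hpos : ∀ x ∈ I, 0 < x := fun x hx => hIpos hx
  refine locallySmaller_bajMean hIopen hIconn.convex hf hf2 hf2c hf'0 hg hg2 hg2c hg'0
    (w := fun x => γ * x ^ δ) (w' := fun x => γ * δ * x ^ (δ - 1))
    (w'' := fun x => γ * δ * ((δ - 1) * x ^ (δ - 1 - 1)))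
    (fun x hx => ?_) (fun x hx => ?_) ?_ (fun x hx => ?_) (fun i x hx => ?_) (fun i x hx => ?_)
    (fun x hx => ?_)
  · exact ((hasDerivAt_rpow_const (Or.inl (hpos x hx).ne')).const_mul γ).congr_deriv (by ring)
  · exact (hasDerivAt_rpow_const (Or.inl (hpos x hx).ne')).const_mul (γ * δ)
  · exact continuousOn_const.mul (continuousOn_const.mul
      (continuousOn_id.rpow_const fun x hx => Or.inl (hpos x hx).ne'))
  · exact mul_pos hγ (rpow_pos_of_pos (hpos x hx) δ)
  · exact mul_pos (hlam i) (rpow_pos_of_pos (hpos x hx) _)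
  · simp only [(hrel i).1, (hrel i).2, rpow_add (hpos x hx)]
    ring
  · obtain ⟨d, hd, hdx⟩ := hposder x hx
    refine ⟨γ ^ 2 * d, by positivity, (hdx.const_mul (γ ^ 2)).congr_of_eventuallyEq ?_⟩
    filter_upwards [hIopen.mem_nhds hx] with y hy
    rw [mul_comm 2 δ, rpow_mul (hpos y hy).le, rpow_two]
    ring

/-- Corollary LCp, sufficiency part: with power weight functions `pᵢ(x) = λᵢ x^{αᵢ}`,
`qᵢ(x) = μᵢ x^{βᵢ}` on `I ⊆ (0,∞)`, `f, g` twice continuously differentiable with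
nonvanishing first derivatives, if `μᵢ = γλᵢ`, `βᵢ = αᵢ + δ` for all `i` (with `γ > 0`)
and `x ↦ x^{2δ}|g'(x)|/|f'(x)|` has an everywhere positive derivative on `I`, then
`A_{f,p}` is locally smaller than `A_{g,q}`. -/
theorem stmt10 {n : ℕ} (hn : 2 ≤ n) (I : Set ℝ) (hIopen : IsOpen I)
    (hIconn : I.OrdConnected) (hIne : I.Nonempty) (hIpos : I ⊆ Set.Ioi (0 : ℝ))
    (f f' f'' g g' g'' : ℝ → ℝ)
    (hf : ∀ x ∈ I, HasDerivAt f (f' x) x) (hf2 : ∀ x ∈ I, HasDerivAt f' (f'' x) x)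
    (hf2c : ContinuousOn f'' I) (hf'0 : ∀ x ∈ I, f' x ≠ 0)
    (hg : ∀ x ∈ I, HasDerivAt g (g' x) x) (hg2 : ∀ x ∈ I, HasDerivAt g' (g'' x) x)
    (hg2c : ContinuousOn g'' I) (hg'0 : ∀ x ∈ I, g' x ≠ 0)
    (lam mu : Fin n → ℝ) (al be : Fin n → ℝ)
    (hlam : ∀ i, 0 < lam i) (hmu : ∀ i, 0 < mu i)
    (γ δ : ℝ) (hγ : 0 < γ)
    (hrel : ∀ i : Fin n, mu i = γ * lam i ∧ be i = al i + δ)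
    (hposder : ∀ x ∈ I, ∃ d : ℝ, 0 < d ∧
      HasDerivAt (fun y => y ^ (2 * δ) * |g' y| / |f' y|) d x) :
    LocallySmaller I (bajMean I f (fun i x => lam i * x ^ al i))
      (bajMean I g (fun i x => mu i * x ^ be i)) :=
  stmt10_general hn I hIopen hIconn hIpos f f' f'' g g' g'' hf hf2 hf2c hf'0 hg hg2 hg2c hg'0 lam mu
    al be hlam γ δ hγ hrel hposder
end
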